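/- arXiv:2510.06688 — 2 statements merged into one kernel-verified Lean document; each statement's English description precedes it below -/
import Mathlib

section
/- For any sequence a : ℕ → ℕ and any L ≥ 1, if a(0) = 1 and a(k) ∈ {0, 2} for all k with 1 ≤ k ≤ L, then for every m with 0 ≤ m ≤ L the m-fold iterated absolute difference sequence satisfies D^m(a)(0) = 1. -/
/-- The absolute difference sequence: `D a k = |a (k+1) - a k|` (natural-number distance). -/
def D (a : ℕ → ℕ) : ℕ → ℕ := fun k => Nat.dist (a (k + 1)) (a k)

theorem stmt_1 (a : ℕ → ℕ) (L : ℕ) (hL : 1 ≤ L)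
    (h0 : a 0 = 1) (h : ∀ k, 1 ≤ k → k ≤ L → a k = 0 ∨ a k = 2) :
    ∀ m, m ≤ L → (D^[m] a) 0 = 1 := by
  have key : ∀ m, m ≤ L → (D^[m] a) 0 = 1 ∧
      (∀ k, 1 ≤ k → k ≤ L - m → (D^[m] a) k = 0 ∨ (D^[m] a) k = 2) := by
    intro m
    induction m with
    | zero => intro _; simpa using ⟨h0, h⟩
    | succ n ih =>
      intro hm
      obtain ⟨h1, h2⟩ := ih (Nat.le_of_succ_le hm)
      rw [Function.iterate_succ_apply']
      constructor
      · have hb : (D^[n] a) 1 = 0 ∨ (D^[n] a) 1 = 2 := by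
          apply h2 1 le_rfl
          omega
        simp only [D, h1]
        rcases hb with hb | hb <;> simp [hb, Nat.dist]
      · intro k hk hk'
        have ha : (D^[n] a) k = 0 ∨ (D^[n] a) k = 2 := h2 k hk (by omega)
        have hb : (D^[n] a) (k+1) = 0 ∨ (D^[n] a) (k+1) = 2 := h2 (k+1) (by omega) (by omega)
        simp only [D]
        rcases ha with ha | ha <;> rcases hb with hb | hb <;> simp [ha, hb, Nat.dist]
  exact fun m hm => (key m hm).1
end

section
/- If a : ℕ → ℕ satisfies a(0) = 1 and a(k) ∈ {0, 2} for all k ≥ 1, then for every m ≥ 0 the iterated absolute difference sequence satisfies D^m(a)(0) = 1 and D^m(a)(k) ∈ {0, 2} for all k ≥ 1. -/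
theorem stmt_2 (a : ℕ → ℕ) (h0 : a 0 = 1) (h : ∀ k, 1 ≤ k → a k = 0 ∨ a k = 2) :
    ∀ m, (D^[m] a) 0 = 1 ∧ ∀ k, 1 ≤ k → (D^[m] a) k = 0 ∨ (D^[m] a) k = 2 := by
  intro m
  induction m generalizing a with
  | zero => exact ⟨h0, h⟩
  | succ n ih =>
    rw [Function.iterate_succ_apply]
    apply ih
    · show Nat.dist (a 1) (a 0) = 1
      rw [h0]
      rcases h 1 le_rfl with h1 | h1 <;> simp [h1, Nat.dist]
    · intro k hk
      show Nat.dist (a (k + 1)) (a k) = 0 ∨ _ = 2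
      rcases h (k + 1) (by omega) with h1 | h1 <;>
        rcases h k hk with h2 | h2 <;> simp [D, h1, h2, Nat.dist]
end
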